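/- Let N ≥ 2 be even and let m_N ∈ {2, 4, …, N−2}. If (μ1*, μ0*) maximizes η(m_N, ·, ·) over [0,1]², then |μ1* − μ0*| ≤ 2·√(log N / m_N). Consequently, if m_N/N → α for some α > 0 as N → ∞ along even N, then |μ1* − μ0*| = O(√(log N / N)) → 0. -/
import Mathlib


open Finset

/-- Binomial pmf: probability that `Binomial(n, p)` equals `k`. -/
noncomputable def binomPMF (n : ℕ) (p : ℝ) (k : ℕ) : ℝ :=
  (n.choose k : ℝ) * p ^ k * (1 - p) ^ (n - k)

/-- `P(X < Y)` for independent `X ~ Binomial(n, p)` and `Y ~ Binomial(n, q)`. -/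
noncomputable def probLT (n : ℕ) (p q : ℝ) : ℝ :=
  ∑ i ∈ Finset.range (n + 1), ∑ j ∈ Finset.range (n + 1),
    if i < j then binomPMF n p i * binomPMF n q j else 0

/-- `P(X = Y)` for independent `X ~ Binomial(n, p)` and `Y ~ Binomial(n, q)`. -/
noncomputable def probEQ (n : ℕ) (p q : ℝ) : ℝ :=
  ∑ i ∈ Finset.range (n + 1), binomPMF n p i * binomPMF n q i

/-- `P(X > Y)` for independent `X ~ Binomial(n, p)` and `Y ~ Binomial(n, q)`. -/
noncomputable def probGT (n : ℕ) (p q : ℝ) : ℝ :=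
  ∑ i ∈ Finset.range (n + 1), ∑ j ∈ Finset.range (n + 1),
    if j < i then binomPMF n p i * binomPMF n q j else 0

/-- Tie-adjusted rollout error probability `e(m, μ1, μ0)` of the empirical success
rule, for a matched-pairs experiment of even size `m` with `n = m/2` observations
per arm. -/
noncomputable def errProb (m : ℕ) (μ1 μ0 : ℝ) : ℝ :=
  if μ0 < μ1 then probLT (m / 2) μ1 μ0 + (1 / 2) * probEQ (m / 2) μ1 μ0
  else if μ1 = μ0 then 1 / 2
  else probGT (m / 2) μ1 μ0 + (1 / 2) * probEQ (m / 2) μ1 μ0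

/-- The marginal cost–benefit ratio `η(m, μ1, μ0)` for population size `N`. -/
noncomputable def eta (N m : ℕ) (μ1 μ0 : ℝ) : ℝ :=
  ((N : ℝ) - (m : ℝ)) * errProb m μ1 μ0 - ((N : ℝ) - (m : ℝ) - 2) * errProb (m + 2) μ1 μ0

/- ---------------- Auxiliary lemmas ---------------- -/

lemma binomPMF_nonneg {p : ℝ} (hp0 : 0 ≤ p) (hp1 : p ≤ 1) (n k : ℕ) :
    0 ≤ binomPMF n p k := by
  have h1 : (0:ℝ) ≤ 1 - p := by linarith
  unfold binomPMF
  positivity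

lemma probLT_nonneg {p q : ℝ} (hp0 : 0 ≤ p) (hp1 : p ≤ 1) (hq0 : 0 ≤ q) (hq1 : q ≤ 1)
    (n : ℕ) : 0 ≤ probLT n p q := by
  apply Finset.sum_nonneg; intro i _
  apply Finset.sum_nonneg; intro j _
  split
  · exact mul_nonneg (binomPMF_nonneg hp0 hp1 n i) (binomPMF_nonneg hq0 hq1 n j)
  · exact le_refl 0

lemma probGT_nonneg {p q : ℝ} (hp0 : 0 ≤ p) (hp1 : p ≤ 1) (hq0 : 0 ≤ q) (hq1 : q ≤ 1)
    (n : ℕ) : 0 ≤ probGT n p q := by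
  apply Finset.sum_nonneg; intro i _
  apply Finset.sum_nonneg; intro j _
  split
  · exact mul_nonneg (binomPMF_nonneg hp0 hp1 n i) (binomPMF_nonneg hq0 hq1 n j)
  · exact le_refl 0

lemma probEQ_nonneg {p q : ℝ} (hp0 : 0 ≤ p) (hp1 : p ≤ 1) (hq0 : 0 ≤ q) (hq1 : q ≤ 1)
    (n : ℕ) : 0 ≤ probEQ n p q := by
  apply Finset.sum_nonneg; intro i _
  exact mul_nonneg (binomPMF_nonneg hp0 hp1 n i) (binomPMF_nonneg hq0 hq1 n i)

lemma errProb_nonneg {p q : ℝ} (hp0 : 0 ≤ p) (hp1 : p ≤ 1) (hq0 : 0 ≤ q) (hq1 : q ≤ 1)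
    (m : ℕ) : 0 ≤ errProb m p q := by
  unfold errProb
  split
  · have h1 := probLT_nonneg hp0 hp1 hq0 hq1 (m / 2)
    have h2 := probEQ_nonneg hp0 hp1 hq0 hq1 (m / 2)
    linarith
  split
  · norm_num
  · have h1 := probGT_nonneg hp0 hp1 hq0 hq1 (m / 2)
    have h2 := probEQ_nonneg hp0 hp1 hq0 hq1 (m / 2)
    linarith

lemma probEQ_comm (n : ℕ) (p q : ℝ) : probEQ n p q = probEQ n q p := by
  unfold probEQ
  exact Finset.sum_congr rfl fun i _ => mul_comm _ _

lemma probGT_eq_probLT (n : ℕ) (p q : ℝ) : probGT n p q = probLT n q p := by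
  unfold probGT probLT
  rw [Finset.sum_comm]
  apply Finset.sum_congr rfl; intro j _
  apply Finset.sum_congr rfl; intro i _
  split
  · exact mul_comm _ _
  · rfl

lemma errProb_comm (m : ℕ) (p q : ℝ) : errProb m p q = errProb m q p := by
  unfold errProb
  rcases lt_trichotomy q p with h | h | h
  · rw [if_pos h, if_neg (not_lt.mpr h.le), if_neg (ne_of_lt h),
      probGT_eq_probLT (m / 2) q p, probEQ_comm (m / 2) q p]
  · subst h
    simp
  · rw [if_neg (not_lt.mpr h.le), if_pos h, if_neg (ne_of_lt h),
      probGT_eq_probLT (m / 2) p q, probEQ_comm (m / 2) p q]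

lemma eta_comm (N m : ℕ) (p q : ℝ) : eta N m p q = eta N m q p := by
  unfold eta
  rw [errProb_comm m p q, errProb_comm (m + 2) p q]

lemma eta_diag (N m : ℕ) (μ : ℝ) : eta N m μ μ = 1 := by
  unfold eta errProb
  rw [if_neg (lt_irrefl μ), if_pos rfl, if_neg (lt_irrefl μ), if_pos rfl]
  ring

lemma sum_binom_exp (n : ℕ) (p t : ℝ) :
    ∑ k ∈ range (n+1), binomPMF n p k * Real.exp (t * k)
      = (p * Real.exp t + (1 - p)) ^ n := by
  rw [add_pow]
  apply Finset.sum_congr rfl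
  intro k _
  rw [mul_pow, show t * (k:ℕ) = (k:ℕ) * t by ring, Real.exp_nat_mul]
  unfold binomPMF
  ring

lemma chernoff (n : ℕ) (p q t : ℝ) (hp0 : 0 ≤ p) (hp1 : p ≤ 1)
    (hq0 : 0 ≤ q) (hq1 : q ≤ 1) (ht : 0 ≤ t) :
    probLT n p q + probEQ n p q
      ≤ (p * Real.exp (-t) + (1 - p)) ^ n * (q * Real.exp t + (1 - q)) ^ n := by
  rw [← sum_binom_exp n p (-t), ← sum_binom_exp n q t, Finset.sum_mul_sum]
  have h1 : probLT n p q + probEQ n p q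
      = ∑ i ∈ range (n+1), ∑ j ∈ range (n+1),
          ((if i < j then binomPMF n p i * binomPMF n q j else 0)
           + (if i = j then binomPMF n p i * binomPMF n q j else 0)) := by
    rw [probLT, probEQ, ← Finset.sum_add_distrib]
    apply Finset.sum_congr rfl
    intro i hi
    rw [Finset.sum_add_distrib]
    congr 1
    rw [Finset.sum_ite_eq (range (n+1)) i (fun j => binomPMF n p i * binomPMF n q j)]
    simp only [hi, if_pos]
  rw [h1]
  apply Finset.sum_le_sum
  intro i _
  apply Finset.sum_le_sum
  intro j _
  have ha := binomPMF_nonneg hp0 hp1 n i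
  have hb := binomPMF_nonneg hq0 hq1 n j
  have hexp : binomPMF n p i * Real.exp (-t * i) * (binomPMF n q j * Real.exp (t * j))
      = binomPMF n p i * binomPMF n q j * Real.exp (t * j - t * i) := by
    rw [mul_mul_mul_comm, ← Real.exp_add]; ring_nf
  rw [hexp]
  rcases lt_trichotomy i j with h | h | h
  · rw [if_pos h, if_neg (Nat.ne_of_lt h), add_zero]
    have : (1:ℝ) ≤ Real.exp (t * j - t * i) := by
      rw [Real.one_le_exp_iff]
      have : (i:ℝ) ≤ (j:ℝ) := by exact_mod_cast h.le
      nlinarith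
    nlinarith [mul_nonneg ha hb]
  · subst h
    rw [if_neg (lt_irrefl i), if_pos rfl, zero_add, sub_self, Real.exp_zero, mul_one]
  · rw [if_neg (Nat.lt_asymm h), if_neg (Nat.ne_of_gt h), add_zero]
    positivity

lemma g_bound (p q : ℝ) (hp1 : p ≤ 1) (hq0 : 0 ≤ q) (hlt : q < p) (hd1 : p - q < 1) :
    ∃ t : ℝ, 0 ≤ t ∧
      (p * Real.exp (-t) + (1 - p)) * (q * Real.exp t + (1 - q))
        ≤ Real.sqrt (1 - (p - q) ^ 2) := by
  set d := p - q with hdd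
  have hd0 : 0 < d := sub_pos.mpr hlt
  have h1d : 0 < 1 - d := by linarith
  have h1d' : 0 < 1 + d := by linarith
  set u := Real.sqrt ((1 + d) / (1 - d)) with hu
  have hupos : 0 < u := Real.sqrt_pos.mpr (by positivity)
  have hu1 : 1 ≤ u := by
    have h := Real.sqrt_le_sqrt (show (1:ℝ) ≤ (1 + d) / (1 - d) by
      rw [le_div_iff₀ h1d]; linarith)
    rwa [Real.sqrt_one] at h
  refine ⟨Real.log u, Real.log_nonneg hu1, ?_⟩
  rw [Real.exp_log hupos, Real.exp_neg, Real.exp_log hupos]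
  set S := Real.sqrt (1 - d ^ 2) with hS
  have h1d2 : 0 < 1 - d ^ 2 := by nlinarith
  have hSpos : 0 < S := Real.sqrt_pos.mpr h1d2
  have hS2 : S ^ 2 = 1 - d ^ 2 := Real.sq_sqrt h1d2.le
  have hu2 : u ^ 2 = (1 + d) / (1 - d) := Real.sq_sqrt (by positivity)
  have hSu : S * u = 1 + d := by
    have hsq : (S * u) ^ 2 = (1 + d) ^ 2 := by
      rw [mul_pow, hS2, hu2]; field_simp; ring
    have hfac : (S * u - (1 + d)) * (S * u + (1 + d)) = 0 := by nlinarith [hsq]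
    rcases mul_eq_zero.mp hfac with h | h
    · linarith
    · nlinarith [mul_pos hSpos hupos]
  have huinv : u⁻¹ = (1 - d) / S := by
    rw [eq_div_iff (ne_of_gt hSpos), inv_mul_eq_div, div_eq_iff (ne_of_gt hupos)]
    nlinarith [hSu, hS2]
  have hSle1 : S ≤ 1 := by
    have h := Real.sqrt_le_sqrt (show 1 - d ^ 2 ≤ 1 by nlinarith)
    rwa [Real.sqrt_one] at h
  have hrepl : u = (1 + d) / S := by
    rw [eq_div_iff (ne_of_gt hSpos)]; linarith [hSu, mul_comm S u]
  rw [huinv, hrepl]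
  have hs : 0 ≤ p * q + (1 - p) * (1 - q) := by nlinarith
  have e1 : p * ((1 - d) / S) + (1 - p) = (p * (1 - d) + (1 - p) * S) / S := by
    field_simp
  have e2 : q * ((1 + d) / S) + (1 - q) = (q * (1 + d) + (1 - q) * S) / S := by
    field_simp
  rw [e1, e2, div_mul_div_comm, div_le_iff₀ (by positivity)]
  have hhint : 0 ≤ S * (1 - S) * (p * q + (1 - p) * (1 - q)) :=
    mul_nonneg (mul_nonneg hSpos.le (by linarith)) hs
  have identity : (p * (1 - d) + (1 - p) * S) * (q * (1 + d) + (1 - q) * S)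
      = S * (S * S) - S * (1 - S) * (p * q + (1 - p) * (1 - q))
        - (S + p * q) * (S ^ 2 - (1 - d ^ 2)) := by
    rw [hdd]; ring
  have hz : (S + p * q) * (S ^ 2 - (1 - d ^ 2)) = 0 := by
    rw [hS2]; ring
  linarith [identity, hz, hhint]

/-- Main tail estimate. -/
lemma tail_bound (N n m : ℕ) (hm : m = 2 * n) (hn1 : 1 ≤ n) (hN4 : 4 ≤ N)
    (p q : ℝ) (hp0 : 0 ≤ p) (hp1 : p ≤ 1) (hq0 : 0 ≤ q) (hq1 : q ≤ 1) (hlt : q < p)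
    (hgap : 2 * Real.sqrt (Real.log N / m) < p - q) :
    probLT n p q + probEQ n p q < 1 / N := by
  have hN4' : (4:ℝ) ≤ N := by exact_mod_cast hN4
  have hN0 : (0:ℝ) < N := by linarith
  have hlogN : 0 < Real.log N := Real.log_pos (by linarith)
  have hm0 : (0:ℝ) < m := by
    have : 0 < m := by omega
    exact_mod_cast this
  have hmr : (m:ℝ) = 2 * (n:ℝ) := by exact_mod_cast hm
  have hx0 : 0 ≤ Real.log N / (m:ℝ) := div_nonneg hlogN.le hm0.le
  have hgapsq : 4 * (Real.log N / m) < (p - q) ^ 2 := by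
    have hsq : (2 * Real.sqrt (Real.log N / m)) ^ 2 < (p - q) ^ 2 := by
      apply pow_lt_pow_left₀ hgap (by positivity) (by norm_num)
    rw [mul_pow, Real.sq_sqrt hx0] at hsq
    linarith
  have hkey : Real.log N < (n:ℝ) * (p - q) ^ 2 / 2 := by
    have h1 : 4 * Real.log N < (p - q) ^ 2 * m := by
      rw [← div_lt_iff₀ hm0] at *
      calc 4 * Real.log N / m = 4 * (Real.log N / m) := by ring
        _ < (p - q)^2 := hgapsq
    rw [hmr] at h1
    linarith
  have hdle1 : p - q ≤ 1 := by linarith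
  rcases lt_or_eq_of_le hdle1 with hdlt | hdeq
  · obtain ⟨t, ht0, hgs⟩ := g_bound p q hp1 hq0 hlt hdlt
    have hch := chernoff n p q t hp0 hp1 hq0 hq1 ht0
    have hf1 : 0 ≤ p * Real.exp (-t) + (1 - p) := by
      have := Real.exp_pos (-t)
      nlinarith
    have hf2 : 0 ≤ q * Real.exp t + (1 - q) := by
      have := Real.exp_pos t
      nlinarith
    have hSexp : Real.sqrt (1 - (p - q) ^ 2) ≤ Real.exp (-(p - q) ^ 2 / 2) := by
      have h1 : 1 - (p - q) ^ 2 ≤ Real.exp (-(p - q) ^ 2) := by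
        have := Real.add_one_le_exp (-(p - q) ^ 2)
        linarith
      have h2 := Real.sqrt_le_sqrt h1
      have h3 : Real.sqrt (Real.exp (-(p - q) ^ 2)) = Real.exp (-(p - q) ^ 2 / 2) := by
        have h4 : Real.exp (-(p - q) ^ 2 / 2) ^ 2 = Real.exp (-(p - q) ^ 2) := by
          rw [← Real.exp_nat_mul]
          congr 1
          push_cast
          ring
        rw [← h4, Real.sqrt_sq (Real.exp_nonneg _)]
      rw [h3] at h2
      exact h2
    calc probLT n p q + probEQ n p q
        ≤ (p * Real.exp (-t) + (1 - p)) ^ n * (q * Real.exp t + (1 - q)) ^ n := hch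
      _ = ((p * Real.exp (-t) + (1 - p)) * (q * Real.exp t + (1 - q))) ^ n :=
          (mul_pow _ _ n).symm
      _ ≤ (Real.sqrt (1 - (p - q) ^ 2)) ^ n :=
          pow_le_pow_left₀ (mul_nonneg hf1 hf2) hgs n
      _ ≤ (Real.exp (-(p - q) ^ 2 / 2)) ^ n :=
          pow_le_pow_left₀ (Real.sqrt_nonneg _) hSexp n
      _ = Real.exp ((n:ℝ) * (-(p - q) ^ 2 / 2)) := (Real.exp_nat_mul _ n).symm
      _ < Real.exp (-Real.log N) := by
          apply Real.exp_lt_exp.mpr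
          nlinarith
      _ = 1 / N := by
          rw [Real.exp_neg, Real.exp_log hN0, one_div]
  · have hp' : p = 1 := by linarith
    have hq' : q = 0 := by linarith
    subst hp'
    subst hq'
    have h2N : (1:ℝ) ≤ 2 * (N:ℝ) := by linarith
    have ht0 : 0 ≤ Real.log (2 * (N:ℝ)) := Real.log_nonneg h2N
    have hch := chernoff n 1 0 (Real.log (2 * (N:ℝ))) hp0 hp1 hq0 hq1 ht0
    have hexp : Real.exp (-Real.log (2 * (N:ℝ))) = (2 * (N:ℝ))⁻¹ := by
      rw [Real.exp_neg, Real.exp_log (by linarith)]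
    simp only [one_mul, sub_self, add_zero, zero_mul, sub_zero, zero_add, one_pow,
      mul_one, hexp] at hch
    have hb1 : ((2 * (N:ℝ))⁻¹) ^ n ≤ ((2 * (N:ℝ))⁻¹) ^ 1 :=
      pow_le_pow_of_le_one (by positivity) (by
        rw [inv_le_one_iff₀]; right; linarith) hn1
    have hb2 : ((2 * (N:ℝ))⁻¹) < 1 / N := by
      rw [show ((2 * (N:ℝ))⁻¹) = 1 / (2 * N) by rw [one_div]]
      apply one_div_lt_one_div_of_lt hN0
      linarith
    rw [pow_one] at hb1
    linarith

lemma eta_lt_one (N m n : ℕ) (hm : m = 2 * n) (hn1 : 1 ≤ n) (hN4 : 4 ≤ N)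
    (hmN : m + 2 ≤ N)
    (p q : ℝ) (hp0 : 0 ≤ p) (hp1 : p ≤ 1) (hq0 : 0 ≤ q) (hq1 : q ≤ 1) (hlt : q < p)
    (hgap : 2 * Real.sqrt (Real.log N / m) < p - q) :
    eta N m p q < 1 := by
  have hdiv : m / 2 = n := by omega
  have htail := tail_bound N n m hm hn1 hN4 p q hp0 hp1 hq0 hq1 hlt hgap
  have herr : errProb m p q < 1 / N := by
    rw [errProb, if_pos hlt, hdiv]
    have hEQ := probEQ_nonneg hp0 hp1 hq0 hq1 n
    linarith
  have hN4' : (4:ℝ) ≤ N := by exact_mod_cast hN4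
  have hN0 : (0:ℝ) < N := by linarith
  have hmN' : (m:ℝ) + 2 ≤ (N:ℝ) := by exact_mod_cast hmN
  have herr2 := errProb_nonneg hp0 hp1 hq0 hq1 (m + 2)
  unfold eta
  have h1 : ((N:ℝ) - m) * errProb m p q < ((N:ℝ) - m) * (1 / N) :=
    mul_lt_mul_of_pos_left herr (by linarith)
  have h2 : 0 ≤ ((N:ℝ) - m - 2) * errProb (m + 2) p q :=
    mul_nonneg (by linarith) herr2
  have h3 : ((N:ℝ) - m) * (1 / N) ≤ 1 := by
    rw [mul_one_div, div_le_one hN0]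
    have : (0:ℝ) ≤ m := by positivity
    linarith
  linarith

/-- Localization of the least favorable Bernoulli states near the diagonal:
any maximizer `(μ1*, μ0*)` of `η(m, ·, ·)` over `[0,1]²` satisfies
`|μ1* − μ0*| ≤ 2√(log N / m)`; consequently, along any sequence of (even)
population sizes `N_j → ∞` with `m_j / N_j → α > 0`, the gap of the maximizers
is `O(√(log N / N))` and tends to `0`. -/
theorem maximizer_localizes_near_diagonal :
    (∀ N m : ℕ, Even N → Even m → 2 ≤ m → m + 2 ≤ N →
      ∀ μ1s μ0s : ℝ, μ1s ∈ Set.Icc (0 : ℝ) 1 → μ0s ∈ Set.Icc (0 : ℝ) 1 →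
        (∀ μ1 ∈ Set.Icc (0 : ℝ) 1, ∀ μ0 ∈ Set.Icc (0 : ℝ) 1,
          eta N m μ1 μ0 ≤ eta N m μ1s μ0s) →
        |μ1s - μ0s| ≤ 2 * Real.sqrt (Real.log N / m)) ∧
    (∀ (Nseq mseq : ℕ → ℕ) (μ1s μ0s : ℕ → ℝ) (α : ℝ), 0 < α →
      (∀ j, Even (Nseq j)) → StrictMono Nseq →
      (∀ j, Even (mseq j) ∧ 2 ≤ mseq j ∧ mseq j + 2 ≤ Nseq j) →
      Filter.Tendsto (fun j => (mseq j : ℝ) / (Nseq j : ℝ)) Filter.atTop (nhds α) →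
      (∀ j, μ1s j ∈ Set.Icc (0 : ℝ) 1 ∧ μ0s j ∈ Set.Icc (0 : ℝ) 1 ∧
        ∀ μ1 ∈ Set.Icc (0 : ℝ) 1, ∀ μ0 ∈ Set.Icc (0 : ℝ) 1,
          eta (Nseq j) (mseq j) μ1 μ0 ≤ eta (Nseq j) (mseq j) (μ1s j) (μ0s j)) →
      (∃ C > 0, ∀ᶠ j in Filter.atTop,
        |μ1s j - μ0s j| ≤ C * Real.sqrt (Real.log (Nseq j) / (Nseq j))) ∧
      Filter.Tendsto (fun j => |μ1s j - μ0s j|) Filter.atTop (nhds 0)) := by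
  have part1 : ∀ N m : ℕ, Even N → Even m → 2 ≤ m → m + 2 ≤ N →
      ∀ μ1s μ0s : ℝ, μ1s ∈ Set.Icc (0 : ℝ) 1 → μ0s ∈ Set.Icc (0 : ℝ) 1 →
        (∀ μ1 ∈ Set.Icc (0 : ℝ) 1, ∀ μ0 ∈ Set.Icc (0 : ℝ) 1,
          eta N m μ1 μ0 ≤ eta N m μ1s μ0s) →
        |μ1s - μ0s| ≤ 2 * Real.sqrt (Real.log N / m) := by
    intro N m hNe hme hm2 hmN μ1s μ0s h1 h0 hmax
    by_contra hcon
    push_neg at hcon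
    obtain ⟨r, hr⟩ := hme
    have hm2n : m = 2 * r := by omega
    have hr1 : 1 ≤ r := by omega
    have hN4 : 4 ≤ N := by omega
    obtain ⟨h10, h11⟩ := Set.mem_Icc.mp h1
    obtain ⟨h00, h01⟩ := Set.mem_Icc.mp h0
    have hmax1 : (1:ℝ) ≤ eta N m μ1s μ0s := by
      have h := hmax 0 (Set.mem_Icc.mpr ⟨le_refl 0, zero_le_one⟩)
        0 (Set.mem_Icc.mpr ⟨le_refl 0, zero_le_one⟩)
      rwa [eta_diag] at h
    rcases lt_trichotomy μ0s μ1s with hlt | heq | hgt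
    · have habs : |μ1s - μ0s| = μ1s - μ0s := abs_of_pos (by linarith)
      rw [habs] at hcon
      have h := eta_lt_one N m r hm2n hr1 hN4 hmN μ1s μ0s h10 h11 h00 h01 hlt hcon
      linarith
    · have : |μ1s - μ0s| = 0 := by rw [heq]; simp
      rw [this] at hcon
      have : 0 ≤ 2 * Real.sqrt (Real.log N / m) := by positivity
      linarith
    · have habs : |μ1s - μ0s| = μ0s - μ1s := by
        rw [abs_sub_comm]; exact abs_of_pos (by linarith)
      rw [habs] at hcon
      have h := eta_lt_one N m r hm2n hr1 hN4 hmN μ0s μ1s h00 h01 h10 h11 hgt hcon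
      rw [eta_comm] at h
      linarith
  refine ⟨part1, ?_⟩
  intro Nseq mseq μ1s μ0s α hα hNev hmono hmprop hten hmax
  have hb : ∀ j, |μ1s j - μ0s j| ≤ 2 * Real.sqrt (Real.log (Nseq j) / (mseq j)) :=
    fun j => part1 (Nseq j) (mseq j) (hNev j) (hmprop j).1 (hmprop j).2.1
      (hmprop j).2.2 _ _ (hmax j).1 (hmax j).2.1 (hmax j).2.2
  set C := 2 * Real.sqrt (2 / α) with hC
  have hCpos : 0 < C := by
    have : 0 < Real.sqrt (2 / α) := Real.sqrt_pos.mpr (by positivity)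
    rw [hC]; linarith
  have hev : ∀ᶠ j in Filter.atTop, α / 2 < (mseq j : ℝ) / (Nseq j : ℝ) :=
    hten.eventually (eventually_gt_nhds (by linarith))
  have hkey : ∀ᶠ j in Filter.atTop,
      |μ1s j - μ0s j| ≤ C * Real.sqrt (Real.log (Nseq j) / (Nseq j)) := by
    filter_upwards [hev] with j hj
    have hN4 : 4 ≤ Nseq j := by
      have := (hmprop j).2.1
      have := (hmprop j).2.2
      omega
    have hN4' : (4:ℝ) ≤ Nseq j := by exact_mod_cast hN4
    have hN0 : (0:ℝ) < Nseq j := by linarith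
    have hm0 : (0:ℝ) < mseq j := by
      have h2 : 2 ≤ mseq j := (hmprop j).2.1
      have : (2:ℝ) ≤ mseq j := by exact_mod_cast h2
      linarith
    have hlog0 : 0 ≤ Real.log (Nseq j) := Real.log_nonneg (by linarith)
    have hmge : α / 2 * Nseq j < mseq j := (lt_div_iff₀ hN0).mp hj
    have hstep : Real.log (Nseq j) / (mseq j)
        ≤ (2 / α) * (Real.log (Nseq j) / (Nseq j)) := by
      have hposb : (0:ℝ) < α / 2 * Nseq j := by positivity
      have h1 : Real.log (Nseq j) / (mseq j)
          ≤ Real.log (Nseq j) / (α / 2 * Nseq j) :=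
        div_le_div_of_nonneg_left hlog0 hposb hmge.le
      have h2 : Real.log (Nseq j) / (α / 2 * Nseq j)
          = (2 / α) * (Real.log (Nseq j) / (Nseq j)) := by
        field_simp
      linarith
    calc |μ1s j - μ0s j| ≤ 2 * Real.sqrt (Real.log (Nseq j) / (mseq j)) := hb j
      _ ≤ 2 * Real.sqrt ((2 / α) * (Real.log (Nseq j) / (Nseq j))) := by
          have := Real.sqrt_le_sqrt hstep
          linarith
      _ = C * Real.sqrt (Real.log (Nseq j) / (Nseq j)) := by
          rw [Real.sqrt_mul (by positivity), hC]
          ring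
  constructor
  · exact ⟨C, hCpos, hkey⟩
  · have hx : Filter.Tendsto (fun j => ((Nseq j : ℝ))) Filter.atTop Filter.atTop :=
      tendsto_natCast_atTop_atTop.comp hmono.tendsto_atTop
    have hlogdiv : Filter.Tendsto (fun x : ℝ => Real.log x / x) Filter.atTop (nhds 0) :=
      Real.isLittleO_log_id_atTop.tendsto_div_nhds_zero
    have h1 : Filter.Tendsto (fun j => Real.log (Nseq j) / (Nseq j))
        Filter.atTop (nhds 0) := hlogdiv.comp hx
    have h3 : Filter.Tendsto (fun j => Real.sqrt (Real.log (Nseq j) / (Nseq j)))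
        Filter.atTop (nhds 0) := by
      have hc := (Real.continuous_sqrt.tendsto 0).comp h1
      rw [Real.sqrt_zero] at hc
      exact hc
    have h2 : Filter.Tendsto (fun j => C * Real.sqrt (Real.log (Nseq j) / (Nseq j)))
        Filter.atTop (nhds 0) := by
      have hc := h3.const_mul C
      rw [mul_zero] at hc
      exact hc
    exact squeeze_zero' (Filter.Eventually.of_forall fun j => abs_nonneg _) hkey h2
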